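/- Assume B̂ is irreducible, β_{jk} ≥ β̂_{jk} for all j,k, and there are no stubborn agents, i.e., for every j there exists k with β_{jk} > β̂_{jk}. Then for every p ∈ [0,1]^N with p ≠ (1,…,1) one has Λ(p) < Λ(1,…,1), and for every p ∈ [0,1]^N with p ≠ 0 one has Λ(p) > Λ(0). Consequently R_max = R_0 = ρ(B D^{−1}) is attained uniquely at the corner p = (1,…,1) and R_min = R_1 = ρ(B̂ D^{−1}) is attained uniquely at the corner p = 0. The symmetric statements hold when β̂_{jk} ≥ β_{jk} for all j,k with B irreducible and no stubborn agents: then Λ is uniquely maximized at p = 0 with R_max = R_1 and uniquely minimized at p = (1,…,1) with R_min = R_0. -/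

import Mathlib

open Matrix Filter Topology

/-- Spectral radius of a real matrix: sup of absolute values of its complex eigenvalues. -/
noncomputable def specRad (N : ℕ) (A : Matrix (Fin N) (Fin N) ℝ) : ℝ :=
  sSup {r : ℝ | ∃ μ ∈ spectrum ℂ (A.map (Complex.ofReal : ℝ → ℂ)), r = ‖μ‖}

/-- Spectral abscissa of a real matrix: sup of real parts of its complex eigenvalues. -/
noncomputable def specAbsc (N : ℕ) (A : Matrix (Fin N) (Fin N) ℝ) : ℝ :=
  sSup {r : ℝ | ∃ μ ∈ spectrum ℂ (A.map (Complex.ofReal : ℝ → ℂ)), r = μ.re}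

/-- Irreducibility of a nonnegative matrix. -/
def MatIrreducible (N : ℕ) (A : Matrix (Fin N) (Fin N) ℝ) : Prop :=
  ∀ i j : Fin N, ∃ m : ℕ, 0 < m ∧ 0 < (A ^ m) i j

/-- The cube [0,1]^N. -/
def cube (N : ℕ) : Set (Fin N → ℝ) := {p | ∀ j, 0 ≤ p j ∧ p j ≤ 1}

/-- B*(p) = (I − diag p) B̂ + diag p · B. -/
noncomputable def Bstar (N : ℕ) (B Bh : Matrix (Fin N) (Fin N) ℝ) (p : Fin N → ℝ) :
    Matrix (Fin N) (Fin N) ℝ :=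
  (1 - Matrix.diagonal p) * Bh + Matrix.diagonal p * B

/-- The network SIRI vector field on (p^S, p^I). -/
noncomputable def siriField (N : ℕ) (B Bh D : Matrix (Fin N) (Fin N) ℝ)
    (y : (Fin N → ℝ) × (Fin N → ℝ)) : (Fin N → ℝ) × (Fin N → ℝ) :=
  (fun j => -(y.1 j * (B *ᵥ y.2) j),
   fun j => ((Bstar N B Bh y.1 - D) *ᵥ y.2) j - y.2 j * (Bh *ᵥ y.2) j)

/-- Membership in the state space Δ_N. -/
def inSimplex (N : ℕ) (y : (Fin N → ℝ) × (Fin N → ℝ)) : Prop :=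
  ∀ j, 0 ≤ y.1 j ∧ 0 ≤ y.2 j ∧ y.1 j + y.2 j ≤ 1

/-- y is a solution of the SIRI dynamics for t ≥ 0. -/
def IsSol (N : ℕ) (B Bh D : Matrix (Fin N) (Fin N) ℝ)
    (y : ℝ → (Fin N → ℝ) × (Fin N → ℝ)) : Prop :=
  ∀ t : ℝ, 0 ≤ t → HasDerivAt y (siriField N B Bh D (y t)) t

/-- Reproduction number R(p) = ρ(B*(p) D⁻¹). -/
noncomputable def Rnum (N : ℕ) (B Bh D : Matrix (Fin N) (Fin N) ℝ) (p : Fin N → ℝ) : ℝ :=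
  specRad N (Bstar N B Bh p * D⁻¹)

/-- Maximum basic reproduction number. -/
noncomputable def Rmax (N : ℕ) (B Bh D : Matrix (Fin N) (Fin N) ℝ) : ℝ :=
  sSup (Rnum N B Bh D '' cube N)

/-- Minimum basic reproduction number. -/
noncomputable def Rmin (N : ℕ) (B Bh D : Matrix (Fin N) (Fin N) ℝ) : ℝ :=
  sInf (Rnum N B Bh D '' cube N)

/-!
If `B̂ ≤ B` entrywise, then `B*(p)` is entrywise nondecreasing in `p`, and when `p j` increases
row `j` increases strictly in some entry because agent `j` is not stubborn. For `s ≥ max δ`,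
each `B*(p) - D + s I` dominates the irreducible `B̂`, so it is an irreducible nonnegative matrix,
and Perron–Frobenius gives `Λ(p) = ρ(B*(p) - D + s I) - s`. The spectral radius is strictly
monotone on irreducible nonnegative matrices: compare with a positive Perron vector and use the
subinvariance bound `r v ≤ A v → r ≤ ρ(A)`, which follows from Gelfand's formula. Hence `Λ` is
strictly increasing on the cube and `ρ(B*(p) D⁻¹)` is nondecreasing, so both are extremal at the
corners. The case `B ≤ B̂` reduces to this one, since `B*(p)` built from `(B, B̂)` is `B*(1 - p)`
built from `(B̂, B)`.
-/

lemma Matrix.mem_spectrum_iff_exists_mulVec_eq_smul {ι K : Type*} [Fintype ι] [DecidableEq ι]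
    [Field K] (A : Matrix ι ι K) (μ : K) : μ ∈ spectrum K A ↔ ∃ v ≠ 0, A *ᵥ v = μ • v := by
  rw [← Matrix.spectrum_toLin', ← Module.End.hasEigenvalue_iff_mem_spectrum]
  constructor
  · intro h
    obtain ⟨v, hv⟩ := h.exists_hasEigenvector
    exact ⟨v, hv.2, by simpa using hv.apply_eq_smul⟩
  · rintro ⟨v, hv, h⟩
    exact Module.End.hasEigenvalue_of_hasEigenvector
      ⟨by simpa [Module.End.mem_eigenspace_iff] using h, hv⟩

lemma le_of_pow_mul_le_of_tendsto {r c L : ℝ} {a : ℕ → ℝ} (hr : 0 ≤ r) (hc : 0 < c)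
    (h : ∀ n, r ^ n * c ≤ a n) (ha : Tendsto (fun n : ℕ => a n ^ (1 / n : ℝ)) atTop (𝓝 L)) :
    r ≤ L := by
  have hlim : Tendsto (fun n : ℕ => r * c ^ (1 / n : ℝ)) atTop (𝓝 r) := by
    simpa using ((Real.continuousAt_const_rpow hc.ne').tendsto.comp
      tendsto_one_div_atTop_nhds_zero_nat).const_mul r
  refine le_of_tendsto_of_tendsto hlim ha ?_
  filter_upwards [eventually_ne_atTop 0] with n hn
  calc r * c ^ (1 / n : ℝ) = (r ^ n * c) ^ (1 / n : ℝ) := by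
        rw [Real.mul_rpow (by positivity) hc.le, ← Real.rpow_natCast, ← Real.rpow_mul hr,
          mul_one_div_cancel (by positivity), Real.rpow_one]
    _ ≤ a n ^ (1 / n : ℝ) := Real.rpow_le_rpow (by positivity) (h n) (by positivity)

section NonnegMatrix

variable {ι R : Type*} [Fintype ι] [Semiring R] [PartialOrder R]

lemma Matrix.pow_apply_le_pow_apply [DecidableEq ι] [IsOrderedRing R] {A A' : Matrix ι ι R}
    (hA : ∀ i j, 0 ≤ A i j) (hAA' : ∀ i j, A i j ≤ A' i j) (n : ℕ) (i j : ι) :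
    (A ^ n) i j ≤ (A' ^ n) i j := by
  induction n generalizing j with
  | zero => rfl
  | succ n ih =>
    simp only [pow_succ, mul_apply]
    exact Finset.sum_le_sum fun k _ => mul_le_mul (ih k) (hAA' k j) (hA k j)
      (pow_apply_nonneg (fun i j => (hA i j).trans (hAA' i j)) n i k)

lemma Matrix.mulVec_mono [IsOrderedRing R] {A : Matrix ι ι R} (hA : ∀ i j, 0 ≤ A i j)
    {v w : ι → R} (hvw : v ≤ w) : A *ᵥ v ≤ A *ᵥ w := fun i =>
  Finset.sum_le_sum fun j _ => mul_le_mul_of_nonneg_left (hvw j) (hA i j)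

lemma Matrix.mulVec_le_mulVec [IsOrderedRing R] {A A' : Matrix ι ι R}
    (hAA' : ∀ i j, A i j ≤ A' i j) {v : ι → R} (hv : 0 ≤ v) : A *ᵥ v ≤ A' *ᵥ v := fun i =>
  Finset.sum_le_sum fun j _ => mul_le_mul_of_nonneg_right (hAA' i j) (hv j)

lemma Matrix.mulVec_pos [IsStrictOrderedRing R] {P : Matrix ι ι R} (hP : ∀ i j, 0 < P i j)
    {v : ι → R} (hv : 0 ≤ v) (hv0 : v ≠ 0) (i : ι) : 0 < (P *ᵥ v) i := by
  obtain ⟨j, hj⟩ := Function.ne_iff.1 hv0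
  exact Finset.sum_pos' (fun k _ => mul_nonneg (hP i k).le (hv k))
    ⟨j, Finset.mem_univ j, mul_pos (hP i j) ((hv j).lt_of_ne' hj)⟩

end NonnegMatrix

section

variable {N : ℕ}

lemma MatIrreducible.mono {A A' : Matrix (Fin N) (Fin N) ℝ} (hirr : MatIrreducible N A)
    (hA : ∀ i j, 0 ≤ A i j) (hAA' : ∀ i j, A i j ≤ A' i j) : MatIrreducible N A' := fun i j =>
  let ⟨m, hm, hpos⟩ := hirr i j
  ⟨m, hm, hpos.trans_le (pow_apply_le_pow_apply hA hAA' m i j)⟩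

lemma MatIrreducible.exists_sum_pow_pos {A : Matrix (Fin N) (Fin N) ℝ} (hirr : MatIrreducible N A)
    (hA : ∀ i j, 0 ≤ A i j) : ∃ M, ∀ i j, 0 < (∑ k ∈ Finset.range M, A ^ k) i j := by
  choose m _ hm using hirr
  refine ⟨Finset.univ.sup (fun ij : Fin N × Fin N => m ij.1 ij.2) + 1, fun i j => ?_⟩
  rw [Matrix.sum_apply]
  refine (hm i j).trans_le <| Finset.single_le_sum (f := fun k => (A ^ k) i j)
    (fun k _ => pow_apply_nonneg hA k i j) (Finset.mem_range.2 (Nat.lt_succ_of_le ?_))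
  exact Finset.le_sup (f := fun ij : Fin N × Fin N => m ij.1 ij.2) (Finset.mem_univ (i, j))

section SpectralRadius

attribute [local instance] Matrix.linftyOpNormedAddCommGroup Matrix.linftyOpNormedRing
  Matrix.linftyOpNormedAlgebra

lemma Matrix.linfty_opNorm_le_of_le {ι : Type*} [Fintype ι] {A A' : Matrix ι ι ℝ}
    (hA : ∀ i j, 0 ≤ A i j) (hAA' : ∀ i j, A i j ≤ A' i j) : ‖A‖ ≤ ‖A'‖ := by
  simp only [linfty_opNorm_def, NNReal.coe_le_coe]
  refine Finset.sup_mono_fun fun i _ => Finset.sum_le_sum fun j _ => ?_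
  rw [← NNReal.coe_le_coe, coe_nnnorm, coe_nnnorm, Real.norm_of_nonneg (hA i j),
    Real.norm_of_nonneg ((hA i j).trans (hAA' i j))]
  exact hAA' i j

lemma specRad_nonneg (A : Matrix (Fin N) (Fin N) ℝ) : 0 ≤ specRad N A :=
  Real.sSup_nonneg fun _ ⟨μ, _, hr⟩ => hr ▸ norm_nonneg μ

variable [NeZero N]

lemma isGreatest_specRad (A : Matrix (Fin N) (Fin N) ℝ) :
    IsGreatest {r : ℝ | ∃ μ ∈ spectrum ℂ (A.map Complex.ofReal), r = ‖μ‖} (specRad N A) := by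
  have hS : {r : ℝ | ∃ μ ∈ spectrum ℂ (A.map Complex.ofReal), r = ‖μ‖} =
      (‖·‖) '' spectrum ℂ (A.map Complex.ofReal) := by
    ext; simp [eq_comm]
  rw [specRad, hS]
  exact ((spectrum.isCompact _).image continuous_norm).isGreatest_sSup
    ((spectrum.nonempty _).image _)

lemma spectralRadius_map_ofReal (A : Matrix (Fin N) (Fin N) ℝ) :
    spectralRadius ℂ (A.map Complex.ofReal) = ENNReal.ofReal (specRad N A) := by
  obtain ⟨⟨μ, hμ, hρ⟩, hle⟩ := isGreatest_specRad A
  refine le_antisymm (iSup₂_le fun ν hν => ?_) ?_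
  · rw [← ENNReal.ofReal_coe_nnreal, coe_nnnorm]
    exact ENNReal.ofReal_le_ofReal (hle ⟨ν, hν, rfl⟩)
  · rw [hρ, ← coe_nnnorm, ENNReal.ofReal_coe_nnreal]
    exact le_iSup₂ (f := fun ν _ => (‖ν‖₊ : ENNReal)) μ hμ

lemma tendsto_norm_pow_rpow_specRad (A : Matrix (Fin N) (Fin N) ℝ) :
    Tendsto (fun n : ℕ => ‖A ^ n‖ ^ (1 / n : ℝ)) atTop (𝓝 (specRad N A)) := by
  have h := spectrum.pow_norm_pow_one_div_tendsto_nhds_spectralRadius (A.map Complex.ofReal)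
  rw [spectralRadius_map_ofReal] at h
  have h' := (ENNReal.tendsto_toReal ENNReal.ofReal_ne_top).comp h
  rw [ENNReal.toReal_ofReal (specRad_nonneg A)] at h'
  convert h' using 2 with n
  have hnorm : ‖(A.map Complex.ofReal) ^ n‖ = ‖A ^ n‖ := by
    rw [← show (A ^ n).map Complex.ofReal = (A.map Complex.ofReal) ^ n from
      Matrix.map_pow A Complex.ofRealHom n]
    simp [linfty_opNorm_def]
  simp [hnorm, ENNReal.toReal_ofReal, Real.rpow_nonneg]

lemma specRad_mono {A A' : Matrix (Fin N) (Fin N) ℝ} (hA : ∀ i j, 0 ≤ A i j)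
    (hAA' : ∀ i j, A i j ≤ A' i j) : specRad N A ≤ specRad N A' :=
  le_of_tendsto_of_tendsto' (tendsto_norm_pow_rpow_specRad A) (tendsto_norm_pow_rpow_specRad A')
    fun n => Real.rpow_le_rpow (norm_nonneg _)
      (Matrix.linfty_opNorm_le_of_le (pow_apply_nonneg hA n) (pow_apply_le_pow_apply hA hAA' n))
      (by positivity)

end SpectralRadius

section PerronFrobenius

attribute [local instance] Matrix.linftyOpNormedAddCommGroup Matrix.linftyOpNormedRing

variable [NeZero N] {A : Matrix (Fin N) (Fin N) ℝ}

lemma le_specRad_of_smul_le_mulVec (hA : ∀ i j, 0 ≤ A i j) {v : Fin N → ℝ} {j₀ : Fin N}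
    (hv : 0 < v j₀) {r : ℝ} (hr : r • v ≤ A *ᵥ v) : r ≤ specRad N A := by
  rcases lt_or_ge r 0 with hr0 | hr0
  · exact hr0.le.trans (specRad_nonneg A)
  have hpow : ∀ n : ℕ, r ^ n • v ≤ (A ^ n) *ᵥ v := by
    intro n
    induction n with
    | zero => simp
    | succ n ih =>
      calc r ^ (n + 1) • v = r ^ n • (r • v) := by rw [pow_succ, mul_smul]
        _ ≤ r ^ n • (A *ᵥ v) := smul_le_smul_of_nonneg_left hr (pow_nonneg hr0 n)
        _ = A *ᵥ (r ^ n • v) := (mulVec_smul A _ v).symm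
        _ ≤ A *ᵥ ((A ^ n) *ᵥ v) := mulVec_mono hA ih
        _ = (A ^ (n + 1)) *ᵥ v := by rw [mulVec_mulVec, pow_succ']
  have hv_le : ∀ u : Fin N → ℝ, u j₀ ≤ ‖u‖ := fun u =>
    (le_abs_self _).trans (norm_le_pi_norm u j₀)
  have hvn : 0 < ‖v‖ := hv.trans_le (hv_le v)
  refine le_of_pow_mul_le_of_tendsto hr0 (div_pos hv hvn) (fun n => ?_)
    (tendsto_norm_pow_rpow_specRad A)
  rw [← mul_div_assoc, div_le_iff₀ hvn]
  calc r ^ n * v j₀ ≤ ((A ^ n) *ᵥ v) j₀ := hpow n j₀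
    _ ≤ ‖(A ^ n) *ᵥ v‖ := hv_le _
    _ ≤ ‖A ^ n‖ * ‖v‖ := linfty_opNorm_mulVec _ _

lemma lt_specRad_of_smul_le_mulVec (hA : ∀ i j, 0 ≤ A i j) (hirr : MatIrreducible N A)
    {w : Fin N → ℝ} (hw : 0 ≤ w) {r : ℝ} (hr : r • w ≤ A *ᵥ w) (hne : r • w ≠ A *ᵥ w) :
    r < specRad N A := by
  obtain ⟨M, hP⟩ := hirr.exists_sum_pow_pos hA
  set P := ∑ k ∈ Finset.range M, A ^ k
  set z := A *ᵥ w - r • w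
  have hPz : ∀ i, 0 < (P *ᵥ z) i := mulVec_pos hP (sub_nonneg.2 hr) (sub_ne_zero.2 hne.symm)
  have hPw : ∀ i, 0 < (P *ᵥ w) i := mulVec_pos hP hw (by rintro rfl; simp at hne)
  have hAPw : A *ᵥ (P *ᵥ w) = r • (P *ᵥ w) + P *ᵥ z := by
    rw [mulVec_mulVec, (Commute.sum_right _ _ _ fun k _ => Commute.self_pow A k).eq,
      ← mulVec_mulVec, ← mulVec_smul, ← mulVec_add, add_sub_cancel]
  -- `P z` is strictly positive, so it still dominates `ε • P w` for small `ε > 0`.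
  obtain ⟨ε, hεPw, hε⟩ := (((eventually_all.2 fun i =>
      (continuous_id.mul continuous_const).continuousAt.eventually_lt continuousAt_const
        (by simpa using hPz i)).filter_mono nhdsWithin_le_nhds).and
      self_mem_nhdsWithin).exists (f := 𝓝[>] (0 : ℝ))
  have hle : (r + ε) • (P *ᵥ w) ≤ A *ᵥ (P *ᵥ w) := fun i => by
    rw [hAPw]
    simpa [add_mul] using (hεPw i).le
  linarith [le_specRad_of_smul_le_mulVec hA (hPw 0) hle, hε]

lemma exists_pos_mulVec_eq_specRad_smul (hA : ∀ i j, 0 ≤ A i j) (hirr : MatIrreducible N A) :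
    ∃ w : Fin N → ℝ, (∀ i, 0 < w i) ∧ A *ᵥ w = specRad N A • w := by
  obtain ⟨⟨μ, hμ, hρ⟩, -⟩ := isGreatest_specRad A
  obtain ⟨x, hx0, hx⟩ := (mem_spectrum_iff_exists_mulVec_eq_smul _ _).1 hμ
  set y : Fin N → ℝ := fun i => ‖x i‖
  have hy : 0 ≤ y := fun i => norm_nonneg _
  have hy0 : y ≠ 0 := fun h => hx0 (funext fun i => norm_eq_zero.1 (congrFun h i))
  have hsub : specRad N A • y ≤ A *ᵥ y := fun i => by
    calc specRad N A * ‖x i‖ = ‖(A.map Complex.ofReal *ᵥ x) i‖ := by simp [hx, hρ]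
      _ = ‖∑ j, (A i j : ℂ) * x j‖ := rfl
      _ ≤ ∑ j, ‖(A i j : ℂ) * x j‖ := norm_sum_le _ _
      _ = (A *ᵥ y) i := by
        simp [y, mulVec, dotProduct, Complex.norm_real, Real.norm_of_nonneg (hA _ _)]
  have heq : specRad N A • y = A *ᵥ y := by
    by_contra hne
    exact lt_irrefl _ (lt_specRad_of_smul_le_mulVec hA hirr hy hsub hne)
  obtain ⟨M, hP⟩ := hirr.exists_sum_pow_pos hA
  refine ⟨(∑ k ∈ Finset.range M, A ^ k) *ᵥ y, mulVec_pos hP hy hy0, ?_⟩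
  rw [mulVec_mulVec, (Commute.sum_right _ _ _ fun k _ => Commute.self_pow A k).eq,
    ← mulVec_mulVec, ← heq, mulVec_smul]

lemma specRad_mem_spectrum (hA : ∀ i j, 0 ≤ A i j) (hirr : MatIrreducible N A) :
    (specRad N A : ℂ) ∈ spectrum ℂ (A.map Complex.ofReal) := by
  obtain ⟨w, hw, hAw⟩ := exists_pos_mulVec_eq_specRad_smul hA hirr
  refine (mem_spectrum_iff_exists_mulVec_eq_smul _ _).2
    ⟨Complex.ofReal ∘ w, fun h => (hw 0).ne' (by simpa using congrFun h 0), funext fun i => ?_⟩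
  exact (RingHom.map_mulVec Complex.ofRealHom A w i).symm.trans (by simp [hAw])

lemma specRad_lt_specRad {A' : Matrix (Fin N) (Fin N) ℝ} (hA : ∀ i j, 0 ≤ A i j)
    (hirr : MatIrreducible N A) (hAA' : ∀ i j, A i j ≤ A' i j) {i₀ j₀ : Fin N}
    (hlt : A i₀ j₀ < A' i₀ j₀) : specRad N A < specRad N A' := by
  obtain ⟨w, hw, hAw⟩ := exists_pos_mulVec_eq_specRad_smul hA hirr
  have hle : A *ᵥ w ≤ A' *ᵥ w := mulVec_le_mulVec hAA' fun i => (hw i).le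
  have hlt' : (A *ᵥ w) i₀ < (A' *ᵥ w) i₀ :=
    Finset.sum_lt_sum (fun j _ => mul_le_mul_of_nonneg_right (hAA' i₀ j) (hw j).le)
      ⟨j₀, Finset.mem_univ _, mul_lt_mul_of_pos_right hlt (hw j₀)⟩
  rw [hAw] at hle hlt'
  exact lt_specRad_of_smul_le_mulVec (fun i j => (hA i j).trans (hAA' i j)) (hirr.mono hA hAA')
    (fun i => (hw i).le) hle fun h => hlt'.ne (congrFun h i₀)

end PerronFrobenius

section SpectralAbscissa

variable [NeZero N]

lemma specAbsc_sub_smul_one {A : Matrix (Fin N) (Fin N) ℝ} (hA : ∀ i j, 0 ≤ A i j)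
    (hirr : MatIrreducible N A) (s : ℝ) : specAbsc N (A - s • 1) = specRad N A - s := by
  have hshift : ∀ μ : ℂ, μ ∈ spectrum ℂ ((A - s • 1).map Complex.ofReal) ↔
      μ + s ∈ spectrum ℂ (A.map Complex.ofReal) := by
    intro μ
    have hmap :
        (A - s • 1).map Complex.ofReal = -algebraMap ℂ _ (s : ℂ) + A.map Complex.ofReal := by
      ext i j
      by_cases h : i = j <;> simp [h, Matrix.algebraMap_matrix_apply, sub_eq_neg_add]
    rw [hmap, spectrum.add_mem_iff]
  rw [specAbsc]
  refine IsGreatest.csSup_eq ⟨⟨(specRad N A - s : ℝ), ?_, by simp⟩, ?_⟩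
  · rw [hshift]
    simpa using specRad_mem_spectrum hA hirr
  · rintro _ ⟨μ, hμ, rfl⟩
    have hle := (isGreatest_specRad A).2 ⟨μ + s, (hshift μ).1 hμ, rfl⟩
    have hre := Complex.re_le_norm (μ + s)
    simp only [Complex.add_re, Complex.ofReal_re] at hre
    linarith

lemma specAbsc_sub_diagonal_lt {X X' : Matrix (Fin N) (Fin N) ℝ} (hX : ∀ i j, 0 ≤ X i j)
    (hirr : MatIrreducible N X) (hXX' : ∀ i j, X i j ≤ X' i j) {i₀ j₀ : Fin N}
    (hlt : X i₀ j₀ < X' i₀ j₀) (δ : Fin N → ℝ) :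
    specAbsc N (X - diagonal δ) < specAbsc N (X' - diagonal δ) := by
  obtain ⟨s, hs⟩ := Finite.bddAbove_range δ
  set d : Fin N → ℝ := fun i => s - δ i
  have hsplit : ∀ Y : Matrix (Fin N) (Fin N) ℝ, Y - diagonal δ = (Y + diagonal d) - s • 1 := by
    intro Y
    ext i j
    by_cases h : i = j
    · simp only [h, Matrix.sub_apply, diagonal_apply_eq, Matrix.add_apply, Matrix.smul_apply,
        one_apply_eq, smul_eq_mul, mul_one, d]
      ring
    · simp [h]
  have hle : ∀ Y : Matrix (Fin N) (Fin N) ℝ, ∀ i j, Y i j ≤ (Y + diagonal d) i j := by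
    intro Y i j
    by_cases h : i = j
    · simp [h, d, hs ⟨j, rfl⟩]
    · simp [h]
  have hXd : ∀ i j, 0 ≤ (X + diagonal d) i j := fun i j => (hX i j).trans (hle X i j)
  have hirrXd : MatIrreducible N (X + diagonal d) := hirr.mono hX (hle X)
  have hXdX'd : ∀ i j, (X + diagonal d) i j ≤ (X' + diagonal d) i j := fun i j =>
    add_le_add_left (hXX' i j) _
  rw [hsplit X, hsplit X', specAbsc_sub_smul_one hXd hirrXd,
    specAbsc_sub_smul_one (fun i j => (hXd i j).trans (hXdX'd i j)) (hirrXd.mono hXd hXdX'd)]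
  exact sub_lt_sub_right (specRad_lt_specRad hXd hirrXd hXdX'd (add_lt_add_left hlt _)) s

end SpectralAbscissa

section Reinfection

variable {B Bh : Matrix (Fin N) (Fin N) ℝ}

lemma Bstar_apply (p : Fin N → ℝ) (i j : Fin N) :
    Bstar N B Bh p i j = Bh i j + p i * (B i j - Bh i j) := by
  simp only [Bstar, sub_mul, one_mul, Matrix.add_apply, Matrix.sub_apply, diagonal_mul]
  ring

lemma Bstar_one : Bstar N B Bh 1 = B := by
  ext i j
  simp [Bstar_apply]

lemma Bstar_zero : Bstar N B Bh 0 = Bh := by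
  ext i j
  simp [Bstar_apply]

lemma Bstar_eq_Bstar_one_sub (p : Fin N → ℝ) :
    Bstar N B Bh p = Bstar N Bh B (1 - p) := by
  ext i j
  simp only [Bstar_apply, Pi.sub_apply, Pi.one_apply]
  ring

lemma cube_eq_Icc : cube N = Set.Icc 0 1 := by
  ext p
  simp [cube, Pi.le_def, forall_and]

lemma Bstar_apply_mono (hle : ∀ i j, Bh i j ≤ B i j) {p q : Fin N → ℝ} (hpq : p ≤ q)
    (i j : Fin N) : Bstar N B Bh p i j ≤ Bstar N B Bh q i j := by
  simp only [Bstar_apply]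
  exact add_le_add_right (mul_le_mul_of_nonneg_right (hpq i) (sub_nonneg.2 (hle i j))) _

lemma le_Bstar_apply (hle : ∀ i j, Bh i j ≤ B i j) {p : Fin N → ℝ} (hp : 0 ≤ p) (i j : Fin N) :
    Bh i j ≤ Bstar N B Bh p i j := by
  simpa [Bstar_zero] using Bstar_apply_mono hle hp i j

variable [NeZero N]

lemma strictMonoOn_specAbsc_Bstar (hBh : ∀ i j, 0 ≤ Bh i j) (hirr : MatIrreducible N Bh)
    (hle : ∀ i j, Bh i j ≤ B i j) (hstub : ∀ j, ∃ k, Bh j k < B j k) (δ : Fin N → ℝ) :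
    StrictMonoOn (fun p => specAbsc N (Bstar N B Bh p - diagonal δ)) (Set.Ici 0) := by
  intro p hp q _ hpq
  obtain ⟨j, hj⟩ := (Pi.lt_def.1 hpq).2
  obtain ⟨k, hk⟩ := hstub j
  refine specAbsc_sub_diagonal_lt (fun i j => (hBh i j).trans (le_Bstar_apply hle hp i j))
    (hirr.mono hBh (le_Bstar_apply hle hp)) (Bstar_apply_mono hle hpq.le) (i₀ := j) (j₀ := k)
    ?_ δ
  simp only [Bstar_apply]
  exact add_lt_add_right (mul_lt_mul_of_pos_right hj (sub_pos.2 hk)) _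

lemma monotoneOn_Rnum (hBh : ∀ i j, 0 ≤ Bh i j) (hle : ∀ i j, Bh i j ≤ B i j) {δ : Fin N → ℝ}
    (hδ : ∀ j, 0 < δ j) : MonotoneOn (Rnum N B Bh (diagonal δ)) (Set.Ici 0) := by
  intro p hp q _ hpq
  have hinv : (diagonal δ)⁻¹ = diagonal δ⁻¹ :=
    inv_eq_left_inv (by simp [diagonal_mul_diagonal, fun j => (hδ j).ne'])
  simp only [Rnum, hinv]
  refine specRad_mono (fun i j => ?_) (fun i j => ?_) <;> simp only [mul_diagonal]
  · exact mul_nonneg ((hBh i j).trans (le_Bstar_apply hle hp i j)) (inv_nonneg.2 (hδ j).le)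
  · exact mul_le_mul_of_nonneg_right (Bstar_apply_mono hle hpq i j) (inv_nonneg.2 (hδ j).le)

lemma strictAntiOn_specAbsc_Bstar (hB : ∀ i j, 0 ≤ B i j) (hirr : MatIrreducible N B)
    (hle : ∀ i j, B i j ≤ Bh i j) (hstub : ∀ j, ∃ k, B j k < Bh j k) (δ : Fin N → ℝ) :
    StrictAntiOn (fun p => specAbsc N (Bstar N B Bh p - diagonal δ)) (Set.Iic 1) := by
  have hswap : (fun p => specAbsc N (Bstar N B Bh p - diagonal δ)) =
      (fun q => specAbsc N (Bstar N Bh B q - diagonal δ)) ∘ (1 - ·) :=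
    funext fun p => by rw [Function.comp_apply, ← Bstar_eq_Bstar_one_sub]
  rw [hswap]
  exact (strictMonoOn_specAbsc_Bstar hB hirr hle hstub δ).comp_strictAntiOn
    (fun _ _ _ _ h => sub_lt_sub_left h 1) fun _ hp => Set.mem_Ici.2 (sub_nonneg.2 hp)

lemma antitoneOn_Rnum (hB : ∀ i j, 0 ≤ B i j) (hle : ∀ i j, B i j ≤ Bh i j) {δ : Fin N → ℝ}
    (hδ : ∀ j, 0 < δ j) : AntitoneOn (Rnum N B Bh (diagonal δ)) (Set.Iic 1) := by
  have hswap : Rnum N B Bh (diagonal δ) = Rnum N Bh B (diagonal δ) ∘ (1 - ·) :=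
    funext fun p => by rw [Function.comp_apply, Rnum, Rnum, ← Bstar_eq_Bstar_one_sub]
  rw [hswap]
  exact (monotoneOn_Rnum hB hle hδ).comp_AntitoneOn
    (fun _ _ _ _ h => sub_le_sub_left h 1) fun _ hp => Set.mem_Ici.2 (sub_nonneg.2 hp)

end Reinfection

end

theorem stmt13_general {N : ℕ} (hN : 2 ≤ N) (B Bh : Matrix (Fin N) (Fin N) ℝ) (δ : Fin N → ℝ)
    (hB : ∀ j k, 0 ≤ B j k) (hBirr : MatIrreducible N B)
    (hBh : ∀ j k, 0 ≤ Bh j k)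
    (hδ : ∀ j, 0 < δ j) :
    (MatIrreducible N Bh → (∀ j k, Bh j k ≤ B j k) → (∀ j, ∃ k, Bh j k < B j k) →
      (∀ p ∈ cube N, p ≠ (fun _ => (1:ℝ)) →
        specAbsc N (Bstar N B Bh p - Matrix.diagonal δ)
          < specAbsc N (Bstar N B Bh (fun _ => (1:ℝ)) - Matrix.diagonal δ)) ∧
      (∀ p ∈ cube N, p ≠ (0 : Fin N → ℝ) →
        specAbsc N (Bstar N B Bh (0 : Fin N → ℝ) - Matrix.diagonal δ)
          < specAbsc N (Bstar N B Bh p - Matrix.diagonal δ)) ∧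
      Rmax N B Bh (Matrix.diagonal δ) = specRad N (B * (Matrix.diagonal δ)⁻¹) ∧
      Rmin N B Bh (Matrix.diagonal δ) = specRad N (Bh * (Matrix.diagonal δ)⁻¹))
    ∧ ((∀ j k, B j k ≤ Bh j k) → (∀ j, ∃ k, B j k < Bh j k) →
      (∀ p ∈ cube N, p ≠ (0 : Fin N → ℝ) →
        specAbsc N (Bstar N B Bh p - Matrix.diagonal δ)
          < specAbsc N (Bstar N B Bh (0 : Fin N → ℝ) - Matrix.diagonal δ)) ∧
      (∀ p ∈ cube N, p ≠ (fun _ => (1:ℝ)) →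
        specAbsc N (Bstar N B Bh (fun _ => (1:ℝ)) - Matrix.diagonal δ)
          < specAbsc N (Bstar N B Bh p - Matrix.diagonal δ)) ∧
      Rmax N B Bh (Matrix.diagonal δ) = specRad N (Bh * (Matrix.diagonal δ)⁻¹) ∧
      Rmin N B Bh (Matrix.diagonal δ) = specRad N (B * (Matrix.diagonal δ)⁻¹)) := by
  have : NeZero N := ⟨by omega⟩
  have h01 : (0 : Fin N → ℝ) ≤ 1 := zero_le_one
  have h0 := Set.left_mem_Icc.2 h01
  have h1 := Set.right_mem_Icc.2 h01
  have hIci : Set.Icc (0 : Fin N → ℝ) 1 ⊆ Set.Ici 0 := fun _ hp => hp.1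
  have hIic : Set.Icc (0 : Fin N → ℝ) 1 ⊆ Set.Iic 1 := fun _ hp => hp.2
  simp only [Rmax, Rmin, cube_eq_Icc]
  refine ⟨fun hBhirr hle hstub => ?_, fun hle hstub => ?_⟩
  · have hΛ := (strictMonoOn_specAbsc_Bstar hBh hBhirr hle hstub δ).mono hIci
    have hR := (monotoneOn_Rnum hBh hle hδ).mono hIci
    refine ⟨fun p hp hp1 => hΛ hp h1 (hp.2.lt_of_ne hp1),
      fun p hp hp0 => hΛ h0 hp (hp.1.lt_of_ne' hp0), ?_, ?_⟩
    · rw [(hR.map_isGreatest (isGreatest_Icc h01)).csSup_eq, Rnum, Bstar_one]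
    · rw [(hR.map_isLeast (isLeast_Icc h01)).csInf_eq, Rnum, Bstar_zero]
  · have hΛ := (strictAntiOn_specAbsc_Bstar hB hBirr hle hstub δ).mono hIic
    have hR := (antitoneOn_Rnum hB hle hδ).mono hIic
    refine ⟨fun p hp hp0 => hΛ h0 hp (hp.1.lt_of_ne' hp0),
      fun p hp hp1 => hΛ hp h1 (hp.2.lt_of_ne hp1), ?_, ?_⟩
    · rw [(hR.map_isLeast (isLeast_Icc h01)).csSup_eq, Rnum, Bstar_zero]
    · rw [(hR.map_isGreatest (isGreatest_Icc h01)).csInf_eq, Rnum, Bstar_one]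

/-- with no stubborn agents, Λ is uniquely extremized at the corners
0 and 1 of the cube, and R_max, R_min equal the corresponding corner reproduction
numbers R₀ = ρ(B D⁻¹), R₁ = ρ(B̂ D⁻¹). -/
theorem stmt13 {N : ℕ} (hN : 2 ≤ N) (B Bh : Matrix (Fin N) (Fin N) ℝ) (δ : Fin N → ℝ)
    (hB : ∀ j k, 0 ≤ B j k) (hBirr : MatIrreducible N B)
    (hBh : ∀ j k, 0 ≤ Bh j k) (hz : ∀ j k, B j k = 0 → Bh j k = 0)
    (hδ : ∀ j, 0 < δ j) :
    (MatIrreducible N Bh → (∀ j k, Bh j k ≤ B j k) → (∀ j, ∃ k, Bh j k < B j k) →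
      (∀ p ∈ cube N, p ≠ (fun _ => (1:ℝ)) →
        specAbsc N (Bstar N B Bh p - Matrix.diagonal δ)
          < specAbsc N (Bstar N B Bh (fun _ => (1:ℝ)) - Matrix.diagonal δ)) ∧
      (∀ p ∈ cube N, p ≠ (0 : Fin N → ℝ) →
        specAbsc N (Bstar N B Bh (0 : Fin N → ℝ) - Matrix.diagonal δ)
          < specAbsc N (Bstar N B Bh p - Matrix.diagonal δ)) ∧
      Rmax N B Bh (Matrix.diagonal δ) = specRad N (B * (Matrix.diagonal δ)⁻¹) ∧
      Rmin N B Bh (Matrix.diagonal δ) = specRad N (Bh * (Matrix.diagonal δ)⁻¹))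
    ∧ ((∀ j k, B j k ≤ Bh j k) → (∀ j, ∃ k, B j k < Bh j k) →
      (∀ p ∈ cube N, p ≠ (0 : Fin N → ℝ) →
        specAbsc N (Bstar N B Bh p - Matrix.diagonal δ)
          < specAbsc N (Bstar N B Bh (0 : Fin N → ℝ) - Matrix.diagonal δ)) ∧
      (∀ p ∈ cube N, p ≠ (fun _ => (1:ℝ)) →
        specAbsc N (Bstar N B Bh (fun _ => (1:ℝ)) - Matrix.diagonal δ)
          < specAbsc N (Bstar N B Bh p - Matrix.diagonal δ)) ∧
      Rmax N B Bh (Matrix.diagonal δ) = specRad N (Bh * (Matrix.diagonal δ)⁻¹) ∧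
      Rmin N B Bh (Matrix.diagonal δ) = specRad N (B * (Matrix.diagonal δ)⁻¹)) :=
  stmt13_general hN B Bh δ hB hBirr hBh hδ
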